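/- arXiv:1903.00157 — 5 statements merged into one kernel-verified Lean document; each statement's English description precedes it below -/
import Mathlib

section
/- If λ ≥ α and y₁₀ > 0, then f has a unique root x* in (0, x₂₀) and f'(x*) ≥ 0 at that root. -/
/-!
With `c = ((λ - α) θ + α) / α > 0`, `K = (1 + p) x₁₀ ≥ 0` and `q = λ / α ≥ 0` we have
`f' x = g x / x` where `g x = c - x - K q (x / x₂₀) ^ q` is strictly decreasing, so `f'` can
only change sign from `+` to `-`. Hence at a zero `a` of `f` below a point `b` with
`f a ≤ f b`, `f'` cannot be negative (else `f` decreases on `[a, b]`), and then `f` is strictly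
increasing up to `a`, which rules out a second zero. Existence follows from the intermediate
value theorem: `f x₂₀ = y₁₀ > 0`, while the logarithm drives `f` below zero near `0`.
-/

open Real Set

section DerivSignChangesOnce

variable {f f' : ℝ → ℝ} {s : Set ℝ} {a b : ℝ}

theorem strictMonoOn_inter_Iic_of_deriv_nonneg (hs : Convex ℝ s)
    (hf : ∀ x ∈ s, HasDerivAt f (f' x) x)
    (hf' : ∀ x ∈ s, ∀ y ∈ s, x < y → 0 ≤ f' y → 0 < f' x)
    (hb : b ∈ s) (hb' : 0 ≤ f' b) : StrictMonoOn f (s ∩ Iic b) := by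
  have hint : interior (s ∩ Iic b) ⊆ s ∩ Iio b := fun x hx =>
    ⟨(interior_subset hx).1, by simpa using interior_mono inter_subset_right hx⟩
  refine strictMonoOn_of_hasDerivWithinAt_pos (hs.inter (convex_Iic b))
    (fun x hx => (hf x hx.1).continuousAt.continuousWithinAt)
    (fun x hx => (hf x (hint hx).1).hasDerivWithinAt) fun x hx => ?_
  exact hf' x (hint hx).1 b hb (hint hx).2 hb'

theorem strictAntiOn_inter_Ici_of_deriv_neg (hs : Convex ℝ s)
    (hf : ∀ x ∈ s, HasDerivAt f (f' x) x)
    (hf' : ∀ x ∈ s, ∀ y ∈ s, x < y → 0 ≤ f' y → 0 < f' x)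
    (ha : a ∈ s) (ha' : f' a < 0) : StrictAntiOn f (s ∩ Ici a) := by
  have hint : interior (s ∩ Ici a) ⊆ s ∩ Ioi a := fun x hx =>
    ⟨(interior_subset hx).1, by simpa using interior_mono inter_subset_right hx⟩
  refine strictAntiOn_of_hasDerivWithinAt_neg (hs.inter (convex_Ici a))
    (fun x hx => (hf x hx.1).continuousAt.continuousWithinAt)
    (fun x hx => (hf x (hint hx).1).hasDerivWithinAt) fun x hx => ?_
  by_contra! hx'
  exact ha'.not_gt (hf' a ha x (hint hx).1 (hint hx).2 hx')

theorem deriv_nonneg_of_apply_le (hs : Convex ℝ s)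
    (hf : ∀ x ∈ s, HasDerivAt f (f' x) x)
    (hf' : ∀ x ∈ s, ∀ y ∈ s, x < y → 0 ≤ f' y → 0 < f' x)
    (ha : a ∈ s) (hb : b ∈ s) (hab : a < b) (hfab : f a ≤ f b) : 0 ≤ f' a := by
  by_contra! ha'
  have := strictAntiOn_inter_Ici_of_deriv_neg hs hf hf' ha ha'
    ⟨ha, self_mem_Ici⟩ ⟨hb, hab.le⟩ hab
  linarith

theorem existsUnique_zero_of_deriv_sign_changes_once (hs : Convex ℝ s)
    (hf : ∀ x ∈ s, HasDerivAt f (f' x) x)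
    (hf' : ∀ x ∈ s, ∀ y ∈ s, x < y → 0 ≤ f' y → 0 < f' x)
    (ha : a ∈ s) (hb : b ∈ s) (hab : a < b) (hfa : f a < 0) (hfb : 0 < f b) :
    (∃! x, x ∈ s ∩ Iio b ∧ f x = 0) ∧ ∀ x ∈ s ∩ Iio b, f x = 0 → 0 ≤ f' x := by
  have hderiv : ∀ x ∈ s ∩ Iio b, f x = 0 → 0 ≤ f' x := fun x hx hfx =>
    deriv_nonneg_of_apply_le hs hf hf' hx.1 hb hx.2 (by linarith)
  have hIcc : Icc a b ⊆ s := hs.ordConnected.out ha hb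
  obtain ⟨x, hx, hfx⟩ := intermediate_value_Ioo hab.le
    (fun y hy => (hf y (hIcc hy)).continuousAt.continuousWithinAt) ⟨hfa, hfb⟩
  have hxs : x ∈ s ∩ Iio b := ⟨hIcc (Ioo_subset_Icc_self hx), hx.2⟩
  -- of two zeros, `f` is strictly increasing up to the larger one
  have hlt : ∀ y ∈ s ∩ Iio b, ∀ z ∈ s ∩ Iio b, f y = 0 → f z = 0 → ¬ y < z := by
    intro y hy z hz hfy hfz hyz
    have := strictMonoOn_inter_Iic_of_deriv_nonneg hs hf hf' hz.1 (hderiv z hz hfz)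
      ⟨hy.1, hyz.le⟩ ⟨hz.1, self_mem_Iic⟩ hyz
    linarith
  refine ⟨⟨x, ⟨hxs, hfx⟩, fun y ⟨hy, hfy⟩ => ?_⟩, hderiv⟩
  exact le_antisymm (not_lt.1 (hlt x hxs y hy hfx hfy)) (not_lt.1 (hlt y hy x hxs hfy hfx))

end DerivSignChangesOnce

noncomputable def logPowProfile (y K c q x₀ x : ℝ) : ℝ :=
  y + K * (1 - (x / x₀) ^ q) + (x₀ - x) + c * log (x / x₀)

section LogPowProfile

variable {y K c q x₀ x : ℝ}

theorem hasDerivAt_logPowProfile (hx : 0 < x) (hx₀ : 0 < x₀) :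
    HasDerivAt (logPowProfile y K c q x₀) ((c - x - K * q * (x / x₀) ^ q) / x) x := by
  have hu : x / x₀ ≠ 0 := (div_pos hx hx₀).ne'
  have hdiv : HasDerivAt (fun t : ℝ => t / x₀) (1 / x₀) x := by
    simpa using (hasDerivAt_id x).div_const x₀
  have hpow := (hasDerivAt_rpow_const (p := q) (Or.inl hu)).comp x hdiv
  have hlog := (hasDerivAt_log hu).comp x hdiv
  have h : HasDerivAt (logPowProfile y K c q x₀)
      (0 + K * (0 - q * (x / x₀) ^ (q - 1) * (1 / x₀)) + (0 - 1)
        + c * ((x / x₀)⁻¹ * (1 / x₀))) x :=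
    (((hasDerivAt_const x y).add (((hasDerivAt_const x 1).sub hpow).const_mul K)).add
      ((hasDerivAt_const x x₀).sub (hasDerivAt_id x))).add (hlog.const_mul c)
  convert h using 1
  rw [rpow_sub_one hu]
  field_simp
  ring

theorem logPowProfile_self (hx₀ : x₀ ≠ 0) : logPowProfile y K c q x₀ x₀ = y := by
  simp [logPowProfile, div_self hx₀]

theorem logPowProfile_mul_exp_neg_lt_zero (hK : 0 ≤ K) (hc : 0 < c) (hx₀ : 0 < x₀) :
    logPowProfile y K c q x₀ (x₀ * exp (-(y + K + x₀) / c)) < 0 := by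
  have hlog : log (x₀ * exp (-(y + K + x₀) / c) / x₀) = -(y + K + x₀) / c := by
    rw [mul_div_cancel_left₀ _ hx₀.ne', log_exp]
  have hpow : 0 ≤ (x₀ * exp (-(y + K + x₀) / c) / x₀) ^ q := by positivity
  have hpos : 0 < x₀ * exp (-(y + K + x₀) / c) := by positivity
  rw [logPowProfile, hlog, mul_div_cancel₀ _ hc.ne']
  nlinarith

theorem logPowProfile_deriv_pos_of_deriv_nonneg (hK : 0 ≤ K) (hq : 0 ≤ q) (hx₀ : 0 < x₀)
    {z : ℝ} (hx : 0 < x) (hxz : x < z) (hz : 0 ≤ (c - z - K * q * (z / x₀) ^ q) / z) :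
    0 < (c - x - K * q * (x / x₀) ^ q) / x := by
  have hpow : (x / x₀) ^ q ≤ (z / x₀) ^ q := by gcongr
  have hgz : 0 ≤ c - z - K * q * (z / x₀) ^ q :=
    (div_nonneg_iff.1 hz).elim And.left fun h => absurd h.2 (by linarith)
  have hKq : 0 ≤ K * q := mul_nonneg hK hq
  exact div_pos (by nlinarith) hx

end LogPowProfile

theorem f_unique_root_general
    (lam al p θ x10 x20 y10 : ℝ)
    (hal : 0 < al) (hla : al ≤ lam)
    (hp : p ∈ Set.Icc (0:ℝ) 1) (hθ : θ ∈ Set.Icc (0:ℝ) 1)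
    (hx10 : 0 < x10) (hx20 : 0 < x20) (hy10 : 0 < y10)
    (f : ℝ → ℝ)
    (hf : ∀ x, f x = y10 + (1 + p) * x10 * (1 - (x / x20) ^ (lam / al))
        + (x20 - x) + ((lam - al) * θ + al) / al * Real.log (x / x20)) :
    (∃! x, x ∈ Set.Ioo (0:ℝ) x20 ∧ f x = 0) ∧
    ∀ x ∈ Set.Ioo (0:ℝ) x20, f x = 0 → 0 ≤ deriv f x := by
  set c := ((lam - al) * θ + al) / al
  set K := (1 + p) * x10
  have hfun : f = logPowProfile y10 K c (lam / al) x20 := funext hf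
  have hc : 0 < c := div_pos (by nlinarith [hθ.1]) hal
  have hK : 0 ≤ K := mul_nonneg (by linarith [hp.1]) hx10.le
  have hq : 0 ≤ lam / al := div_nonneg (by linarith) hal.le
  have hderiv : ∀ x ∈ Ioi (0:ℝ),
      HasDerivAt f ((c - x - K * (lam / al) * (x / x20) ^ (lam / al)) / x) x :=
    fun x hx => hfun ▸ hasDerivAt_logPowProfile hx hx20
  have h0 : 0 < x20 * exp (-(y10 + K + x20) / c) := by positivity
  have hlt : x20 * exp (-(y10 + K + x20) / c) < x20 :=
    mul_lt_of_lt_one_right hx20 (Real.exp_lt_one_iff.2 (div_neg_of_neg_of_pos (by linarith) hc))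
  obtain ⟨hexists, hroots⟩ := existsUnique_zero_of_deriv_sign_changes_once (convex_Ioi 0) hderiv
    (fun x hx z _ hxz hz => logPowProfile_deriv_pos_of_deriv_nonneg hK hq hx20 hx hxz hz)
    h0 hx20 hlt (hfun ▸ logPowProfile_mul_exp_neg_lt_zero hK hc hx20)
    (by rw [hfun, logPowProfile_self hx20.ne']; exact hy10)
  rw [← Ioi_inter_Iio]
  exact ⟨hexists, fun x hx hfx => (hderiv x hx.1).deriv ▸ hroots x hx hfx⟩

theorem f_unique_root
    (lam al p θ x10 x20 y10 : ℝ)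
    (hlam : 0 < lam) (hal : 0 < al) (hla : al ≤ lam)
    (hp : p ∈ Set.Icc (0:ℝ) 1) (hθ : θ ∈ Set.Icc (0:ℝ) 1)
    (hx10 : 0 < x10) (hx20 : 0 < x20) (hy10 : 0 < y10)
    (hsum : x10 + x20 + y10 ≤ 1)
    (f : ℝ → ℝ)
    (hf : ∀ x, f x = y10 + (1 + p) * x10 * (1 - (x / x20) ^ (lam / al))
        + (x20 - x) + ((lam - al) * θ + al) / al * Real.log (x / x20)) :
    (∃! x, x ∈ Set.Ioo (0:ℝ) x20 ∧ f x = 0) ∧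
    ∀ x ∈ Set.Ioo (0:ℝ) x20, f x = 0 → 0 ≤ deriv f x :=
  f_unique_root_general lam al p θ x10 x20 y10 hal hla hp hθ hx10 hx20 hy10 f hf
end

section
/- Suppose λ < α and define x̄ = x₂₀·[((α+(λ-α)θ)·α)/(x₁₀·λ·(α-λ)·(1+p))]^(α/λ). Then the second derivative of f vanishes at x̄ whenever x̄ ∈ (0, x₂₀], i.e., x̄ is an inflection point of f. -/
theorem f_inflection_point
    (lam al p θ x10 x20 y10 : ℝ)
    (hlam : 0 < lam) (hal : 0 < al) (hla : lam < al)
    (hp : p ∈ Set.Icc (0:ℝ) 1) (hθ : θ ∈ Set.Icc (0:ℝ) 1)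
    (hpos : (lam - al) * θ + al > 0)
    (hx10 : 0 < x10) (hx20 : 0 < x20) (hy10 : 0 ≤ y10)
    (f : ℝ → ℝ)
    (hf : ∀ x, f x = y10 + (1 + p) * x10 * (1 - (x / x20) ^ (lam / al))
        + (x20 - x) + ((lam - al) * θ + al) / al * Real.log (x / x20))
    (xbar : ℝ)
    (hxbar : xbar = x20 * (((al + (lam - al) * θ) * al) / (x10 * lam * (al - lam) * (1 + p))) ^ (al / lam))
    (hmem : xbar ∈ Set.Ioc (0:ℝ) x20) :
    deriv (deriv f) xbar = 0 := by
  obtain ⟨hx, _⟩ := hmem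
  have hp1 : (0:ℝ) < 1 + p := by linarith [hp.1]
  have hAl : (0:ℝ) < al - lam := by linarith
  set r : ℝ := lam / al with hr
  set c : ℝ := ((lam - al) * θ + al) / al with hc
  set A : ℝ := ((al + (lam - al) * θ) * al) / (x10 * lam * (al - lam) * (1 + p)) with hA
  have hApos : 0 < A := by
    apply div_pos (by nlinarith) (by positivity)
  have hx20r : (0:ℝ) < x20 ^ r := Real.rpow_pos_of_pos hx20 r
  -- F : nice form of f on Ioi 0
  set F : ℝ → ℝ := fun x => y10 + (1 + p) * x10 * (1 - x ^ r / x20 ^ r)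
      + (x20 - x) + c * (Real.log x - Real.log x20) with hFdef
  have hfF : ∀ y ∈ Set.Ioi (0:ℝ), f y = F y := by
    intro y hy
    have hy' : (0:ℝ) < y := hy
    rw [hf, hFdef]
    simp only
    rw [Real.div_rpow hy'.le hx20.le, Real.log_div hy'.ne' hx20.ne']
  set G : ℝ → ℝ := fun x => (-((1 + p) * x10 * r / x20 ^ r)) * x ^ (r - 1) + (-1) + c * x⁻¹
    with hGdef
  have hFG : ∀ y ∈ Set.Ioi (0:ℝ), HasDerivAt F (G y) y := by
    intro y hy
    have hy' : (0:ℝ) < y := hy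
    have h1 : HasDerivAt (fun x : ℝ => x ^ r) (r * y ^ (r - 1)) y :=
      Real.hasDerivAt_rpow_const (Or.inl hy'.ne')
    have h2 : HasDerivAt (fun x : ℝ => Real.log x) y⁻¹ y := Real.hasDerivAt_log hy'.ne'
    have hD : HasDerivAt F
        (0 + (1 + p) * x10 * (0 - r * y ^ (r - 1) / x20 ^ r) + (0 - 1) + c * (y⁻¹ - 0)) y := by
      exact (((hasDerivAt_const y y10).add
          (((hasDerivAt_const y (1:ℝ)).sub (h1.div_const (x20 ^ r))).const_mul ((1 + p) * x10))).add
          ((hasDerivAt_const y x20).sub (hasDerivAt_id y))).add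
          ((h2.sub (hasDerivAt_const y (Real.log x20))).const_mul c)
    convert hD using 1
    rw [hGdef]; ring
  have hO : Set.Ioi (0:ℝ) ∈ nhds xbar := Ioi_mem_nhds hx
  have hdf : deriv f =ᶠ[nhds xbar] G := by
    filter_upwards [hO] with y hy
    have hfe : f =ᶠ[nhds y] F :=
      Filter.eventually_of_mem (isOpen_Ioi.mem_nhds hy) hfF
    rw [hfe.deriv_eq, (hFG y hy).deriv]
  rw [hdf.deriv_eq]
  -- compute deriv G at xbar
  have h1 : HasDerivAt (fun x : ℝ => x ^ (r - 1)) ((r - 1) * xbar ^ (r - 1 - 1)) xbar :=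
    Real.hasDerivAt_rpow_const (Or.inl hx.ne')
  have h2 : HasDerivAt (fun x : ℝ => x⁻¹) (-(xbar ^ 2)⁻¹) xbar := hasDerivAt_inv hx.ne'
  have hG' : HasDerivAt G
      ((-((1 + p) * x10 * r / x20 ^ r)) * ((r - 1) * xbar ^ (r - 1 - 1)) + 0 + c * (-(xbar ^ 2)⁻¹))
      xbar :=
    ((h1.const_mul (-((1 + p) * x10 * r / x20 ^ r))).add (hasDerivAt_const xbar (-1))).add
      (h2.const_mul c)
  rw [hG'.deriv]
  -- key algebraic fact
  have hkey : xbar ^ r = A * x20 ^ r := by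
    rw [hxbar, Real.mul_rpow hx20.le (Real.rpow_nonneg hApos.le _),
        ← Real.rpow_mul hApos.le]
    have he : al / lam * r = 1 := by
      rw [hr]; field_simp
    rw [he, Real.rpow_one]; ring
  have hxp : xbar ^ (r - 1 - 1) = A * x20 ^ r / xbar ^ 2 := by
    have : r - 1 - 1 = r - (2:ℕ) := by push_cast; ring
    rw [this, Real.rpow_sub hx, Real.rpow_natCast, hkey]
  rw [hxp]
  have hx2 : (0:ℝ) < xbar ^ 2 := by positivity
  field_simp
  rw [hr, hc, hA]
  field_simp
  ring
end

section
/- Along the solution of the ODE system, the identity y₁(t) = f(x₂(t)) holds for all t ≥ 0, where f(x) = y₁₀ + (1+p)x₁₀[1 - (x/x₂₀)^(λ/α)] + (x₂₀ - x) + [((λ-α)θ+α)/α]·ln(x/x₂₀). -/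
theorem y1_eq_f_x2
    (lam al p θ x10 x20 y10 : ℝ)
    (hlam : 0 < lam) (hal : 0 < al)
    (hp : p ∈ Set.Icc (0:ℝ) 1) (hθ : θ ∈ Set.Icc (0:ℝ) 1)
    (hx10 : 0 < x10) (hx20 : 0 < x20) (hy10 : 0 ≤ y10)
    (x1 x2 y1 : ℝ → ℝ)
    (hx1 : ∀ t, x1 t = x10 * Real.exp (-lam * t))
    (hx2 : ∀ t, x2 t = x20 * Real.exp (-al * t))
    (hy1 : ∀ t, y1 t = y10 + (1 + p) * (x10 - x1 t) + (x20 - x2 t) + (θ * (al - lam) - al) * t)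
    (f : ℝ → ℝ)
    (hf : ∀ x, f x = y10 + (1 + p) * x10 * (1 - (x / x20) ^ (lam / al))
        + (x20 - x) + ((lam - al) * θ + al) / al * Real.log (x / x20)) :
    ∀ t, 0 ≤ t → y1 t = f (x2 t) := by
  intro t ht
  rw [hy1, hf, hx1, hx2]
  have hdiv : x20 * Real.exp (-al * t) / x20 = Real.exp (-al * t) := by
    field_simp
  rw [hdiv, Real.log_exp]
  have hpow : (Real.exp (-al * t)) ^ (lam / al) = Real.exp (-lam * t) := by
    rw [Real.rpow_def_of_pos (Real.exp_pos _), Real.log_exp]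
    congr 1
    field_simp
  rw [hpow]
  have : (θ * (al - lam) - al) * t = ((lam - al) * θ + al) / al * (-al * t) := by
    field_simp
    ring
  rw [this]
  ring
end

section
/- Let w = W₀(-(2x₁₀+x₂₀)e^{-(y₁₀+2x₁₀+x₂₀)}) where W₀ is the principal branch of the Lambert W function, and set x₁∞ = -x₁₀·w/(2x₁₀+x₂₀), x₂∞ = -x₂₀·w/(2x₁₀+x₂₀). Then with λ = α and p = 1, x₂∞ is a root of f, i.e., y₁₀ + 2x₁₀(1 - x₂∞/x₂₀) + (x₂₀ - x₂∞) + ln(x₂∞/x₂₀) = 0, and x₁∞ = x₁₀·(x₂∞/x₂₀). -/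
open Real

/- With c = 2x₁₀ + x₂₀ and t = x₂∞/x₂₀ = -w/c > 0, dividing the Lambert equation by -c gives
t·e^w = e^{-(y₁₀ + c)}; taking logarithms, log t = -(y₁₀ + c) - w = -(y₁₀ + c(1 - t)), which is
the root equation of f. -/

theorem neg_of_mul_exp_eq_neg_mul_exp {w c b : ℝ} (hc : 0 < c)
    (hw : w * exp w = -c * exp (-b)) : w < 0 := by
  have hrhs : -c * exp (-b) < 0 := by nlinarith [exp_pos (-b)]
  exact neg_of_mul_neg_left (hw ▸ hrhs) (exp_pos w).le

theorem log_neg_div_of_mul_exp_eq {w c b : ℝ} (hc : 0 < c)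
    (hw : w * exp w = -c * exp (-b)) : log (-w / c) = -b - w := by
  have ht : 0 < -w / c := div_pos (neg_pos.mpr (neg_of_mul_exp_eq_neg_mul_exp hc hw)) hc
  have hexp : -w / c * exp w = exp (-b) := by
    field_simp
    linarith
  have := congrArg log hexp
  rw [log_mul ht.ne' (exp_ne_zero _), log_exp, log_exp] at this
  linarith

theorem lambert_root_general
    (x10 x20 y10 : ℝ)
    (hx10 : 0 < x10) (hx20 : 0 < x20)
    (w : ℝ)
    (hw : w * Real.exp w = -(2 * x10 + x20) * Real.exp (-(y10 + 2 * x10 + x20)))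
    (x1inf x2inf : ℝ)
    (hx1inf : x1inf = -x10 * w / (2 * x10 + x20))
    (hx2inf : x2inf = -x20 * w / (2 * x10 + x20)) :
    y10 + 2 * x10 * (1 - x2inf / x20) + (x20 - x2inf) + Real.log (x2inf / x20) = 0 ∧
    x1inf = x10 * (x2inf / x20) := by
  have hc : 0 < 2 * x10 + x20 := by positivity
  have hratio : x2inf / x20 = -w / (2 * x10 + x20) := by
    rw [hx2inf]
    field_simp
  have hlog := log_neg_div_of_mul_exp_eq hc hw
  refine ⟨?_, ?_⟩
  · rw [hratio, hlog, hx2inf]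
    field_simp
    ring
  · rw [hx1inf, hratio]
    ring

theorem lambert_root
    (x10 x20 y10 : ℝ)
    (hx10 : 0 < x10) (hx20 : 0 < x20) (hy10 : 0 ≤ y10)
    (hsum : x10 + x20 + y10 = 1)
    (w : ℝ)
    (hw_principal : -1 ≤ w)
    (hw : w * Real.exp w = -(2 * x10 + x20) * Real.exp (-(y10 + 2 * x10 + x20)))
    (x1inf x2inf : ℝ)
    (hx1inf : x1inf = -x10 * w / (2 * x10 + x20))
    (hx2inf : x2inf = -x20 * w / (2 * x10 + x20)) :
    y10 + 2 * x10 * (1 - x2inf / x20) + (x20 - x2inf) + Real.log (x2inf / x20) = 0 ∧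
    x1inf = x10 * (x2inf / x20) :=
  lambert_root_general x10 x20 y10 hx10 hx20 w hw x1inf x2inf hx1inf hx2inf
end

section
/- For the basic Maki-Thompson parameters (θ = λ = p = 1, α = λ, x₁₀ → 1, y₁₀ → 0, x₂₀ → 0 limit reduces to): the equation 2(1-x) + ln(x) = 0 has a unique root x* in (0,1), and x* < 0.204 (approximately 20% of the population remains ignorant). -/
/-!
The function `g x = 2 * (1 - x) + log x` is strictly concave on `(0, ∞)` and vanishes at `1`.
A strictly concave function exceeds the smaller of its endpoint values on every open interval,
so `g` has at most one zero in `(0, 1)`, and since `g 0.204 > 0 = g 1` that zero lies below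
`0.204`. It exists by the intermediate value theorem, as `g (exp (-2)) = -2 * exp (-2) < 0`.
-/

open Real Set

section StrictConcave

variable {s : Set ℝ} {f : ℝ → ℝ} {a b c : ℝ}

theorem StrictConcaveOn.min_lt_of_mem_Ioo (hf : StrictConcaveOn ℝ s f) (ha : a ∈ s) (hc : c ∈ s)
    (hb : b ∈ Ioo a c) : min (f a) (f c) < f b :=
  hf.lt_on_openSegment ha hc (hb.1.trans hb.2).ne (by rwa [openSegment_eq_Ioo (hb.1.trans hb.2)])

theorem StrictConcaveOn.eq_of_map_eq_of_lt (hf : StrictConcaveOn ℝ s f) (ha : a ∈ s) (hb : b ∈ s)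
    (hc : c ∈ s) (hac : a < c) (hbc : b < c) (hfa : f a = f c) (hfb : f b = f c) : a = b := by
  by_contra hab
  rcases lt_or_gt_of_ne hab with hab | hba
  · have := hf.min_lt_of_mem_Ioo ha hc ⟨hab, hbc⟩
    simp only [hfa, hfb, min_self, lt_self_iff_false] at this
  · have := hf.min_lt_of_mem_Ioo hb hc ⟨hba, hac⟩
    simp only [hfa, hfb, min_self, lt_self_iff_false] at this

theorem StrictConcaveOn.lt_of_map_le_of_lt (hf : StrictConcaveOn ℝ s f) (ha : a ∈ s) (hb : b ∈ s)
    (hc : c ∈ s) (hac : a < c) (hfa : f a ≤ f c) (hfb : f c < f b) : a < b := by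
  by_contra! hba
  rcases hba.eq_or_lt with rfl | hba
  · exact hfa.not_gt hfb
  · have := hf.min_lt_of_mem_Ioo hb hc ⟨hba, hac⟩
    rw [min_eq_right hfb.le] at this
    exact hfa.not_gt this

end StrictConcave

noncomputable def makiThompsonFn (x : ℝ) : ℝ := 2 * (1 - x) + log x

theorem strictConcaveOn_makiThompsonFn : StrictConcaveOn ℝ (Ioi 0) makiThompsonFn := by
  have affine : ConcaveOn ℝ (Ioi 0) fun x : ℝ => 2 * (1 - x) :=
    (concaveOn_const 2 (convex_Ioi 0)).sub ((convexOn_id (convex_Ioi 0)).smul zero_le_two)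
      |>.congr fun x _ => by simp only [id_eq, smul_eq_mul, Pi.sub_apply]; ring
  exact affine.add_strictConcaveOn strictConcaveOn_log_Ioi

theorem makiThompsonFn_one : makiThompsonFn 1 = 0 := by
  simp [makiThompsonFn]

theorem makiThompsonFn_exp_neg_two_neg : makiThompsonFn (exp (-2)) < 0 := by
  simp only [makiThompsonFn, log_exp]
  linarith [exp_pos (-2)]

-- `1.592 = 2 * (1 - 0.204)`, so this says `g 0.204 > 0`; `250 / 51 = 0.204⁻¹`.
theorem exp_neg_lt_0204 : exp (-1.592) < 0.204 := by
  have taylor : (250 : ℝ) / 51 < exp 1.592 :=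
    calc (250 : ℝ) / 51
        < ∑ i ∈ Finset.range 10, (1.592 : ℝ) ^ i / i.factorial := by
          simp only [Finset.sum_range_succ, Finset.sum_range_zero, Nat.factorial]
          norm_num
      _ ≤ exp 1.592 := sum_le_exp_of_nonneg (by norm_num) 10
  rw [exp_neg, inv_lt_comm₀ (exp_pos _) (by norm_num)]
  linarith

theorem makiThompsonFn_0204_pos : 0 < makiThompsonFn 0.204 := by
  have := (lt_log_iff_exp_lt (by norm_num)).2 exp_neg_lt_0204
  simp only [makiThompsonFn]
  linarith

theorem exists_makiThompsonFn_eq_zero :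
    ∃ x ∈ Ioo (exp (-2)) 0.204, makiThompsonFn x = 0 := by
  have hlt : exp (-2) < 0.204 :=
    (exp_lt_exp.2 (by norm_num)).trans exp_neg_lt_0204
  have hcont : ContinuousOn makiThompsonFn (Icc (exp (-2)) 0.204) := by
    unfold makiThompsonFn
    exact continuousOn_const.mul (continuousOn_const.sub continuousOn_id) |>.add <|
      continuousOn_log.mono fun x hx => ((exp_pos _).trans_le hx.1).ne'
  exact intermediate_value_Ioo hlt.le hcont
    ⟨makiThompsonFn_exp_neg_two_neg, makiThompsonFn_0204_pos⟩

theorem maki_thompson_root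
    : (∃! x, x ∈ Set.Ioo (0:ℝ) 1 ∧ 2 * (1 - x) + Real.log x = 0) ∧
      ∀ x ∈ Set.Ioo (0:ℝ) 1, 2 * (1 - x) + Real.log x = 0 → x < 0.204 := by
  have hg := strictConcaveOn_makiThompsonFn
  have one_mem : (1 : ℝ) ∈ Ioi 0 := mem_Ioi.2 one_pos
  have eq_at_one {y : ℝ} (h : makiThompsonFn y = 0) : makiThompsonFn y = makiThompsonFn 1 :=
    h.trans makiThompsonFn_one.symm
  obtain ⟨x, ⟨hx_gt, hx_lt⟩, hgx⟩ := exists_makiThompsonFn_eq_zero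
  have hx0 : 0 < x := (exp_pos _).trans hx_gt
  have hx1 : x < 1 := hx_lt.trans (by norm_num)
  refine ⟨⟨x, ⟨⟨hx0, hx1⟩, hgx⟩, ?_⟩, ?_⟩
  · rintro y ⟨⟨hy0, hy1⟩, hgy⟩
    exact hg.eq_of_map_eq_of_lt hy0 hx0 one_mem hy1 hx1 (eq_at_one hgy) (eq_at_one hgx)
  · rintro y ⟨hy0, hy1⟩ hgy
    exact hg.lt_of_map_le_of_lt hy0 (by norm_num) one_mem hy1 (eq_at_one hgy).le
      (makiThompsonFn_one.trans_lt makiThompsonFn_0204_pos)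
end
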